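/- Let k be a positive integer, R = ℚ[h_1,…,h_k] graded by assigning degree i to h_i, and I_k the (homogeneous) ideal of R generated by the k-rectangular Schur polynomials S_{(ℓ^{k+1−ℓ})} for ℓ = 1,…,k. Then for every d ≥ 0, the ℚ-dimension of the degree-d homogeneous component of R/I_k equals the coefficient of q^d in the polynomial ∏_{i=1}^{k−1} (1 + q^i + q^{2i} + ⋯ + q^{(k−i)i}). -/

import Mathlib

open MvPolynomial

/-- A partition: a weakly decreasing list of positive integers
(parts listed from largest to smallest). -/
def IsPartitionList (l : List ℕ) : Prop :=
  l.Pairwise (· ≥ ·) ∧ ∀ x ∈ l, 0 < x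

/-- A `k`-bounded partition: a partition all of whose parts are at most `k`. -/
def IsKBoundedPartition (k : ℕ) (l : List ℕ) : Prop :=
  IsPartitionList l ∧ ∀ x ∈ l, x ≤ k

/-- A `k`-bounded partition is `k`-irreducible if, for each `j = 1, …, k`, it has
at most `k - j` parts equal to `j` (in particular no part equal to `k`). -/
def IsKIrreducible (k : ℕ) (l : List ℕ) : Prop :=
  IsKBoundedPartition k l ∧ ∀ j, 1 ≤ j → j ≤ k → l.count j ≤ k - j

/-- The generator `h_m` of `R = ℚ[h_1, …, h_k]` (realized as the polynomial ring
in the `k` indeterminates `X 0 = h_1, …, X (k-1) = h_k`), with the conventions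
`h_0 = 1` and `h_m = 0` for `m < 0` or `m > k`. -/
noncomputable def hElem (k : ℕ) (m : ℤ) : MvPolynomial (Fin k) ℚ :=
  if hm : 1 ≤ m ∧ m ≤ (k : ℤ) then X ⟨m.toNat - 1, by omega⟩
  else if m = 0 then 1 else 0

/-- The `k`-rectangular Schur polynomial `S_{(ℓ^{k+1-ℓ})}`, given by the
Jacobi–Trudi determinant `det (h_{ℓ - i + j})_{1 ≤ i, j ≤ k+1-ℓ}`. -/
noncomputable def rectSchur (k ℓ : ℕ) : MvPolynomial (Fin k) ℚ :=
  (Matrix.of fun i j : Fin (k + 1 - ℓ) =>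
    hElem k ((ℓ : ℤ) - (((i : ℕ) : ℤ) + 1) + (((j : ℕ) : ℤ) + 1))).det

/-- The ideal `I_k` of `R = ℚ[h_1, …, h_k]` generated by the `k`-rectangular
Schur polynomials `S_{(ℓ^{k+1-ℓ})}`, `ℓ = 1, …, k`. -/
noncomputable def rectIdeal (k : ℕ) : Ideal (MvPolynomial (Fin k) ℚ) :=
  Ideal.span (rectSchur k '' Set.Icc 1 k)

/-- For a `k`-bounded partition `λ = (λ_1, …, λ_n)`, the product
`h_λ = h_{λ_1} ⋯ h_{λ_n}`. -/
noncomputable def hProd (k : ℕ) (l : List ℕ) : MvPolynomial (Fin k) ℚ :=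
  (l.map fun m => hElem k (m : ℤ)).prod

/-- The polynomial `∏_{i=1}^{k-1} (1 + q^i + q^{2i} + ⋯ + q^{(k-i)i})`. -/
noncomputable def rankGenPoly (k : ℕ) : Polynomial ℕ :=
  ∏ i ∈ Finset.Icc 1 (k - 1),
    ∑ j ∈ Finset.range (k - i + 1), (Polynomial.X : Polynomial ℕ) ^ (j * i)

open Finsupp

/-!
Write `X i = h_{i+1}` and `T i = S_{((i+1)^{k-i})}`. Expanding the Jacobi–Trudi determinant,
`T i` is `X i ^ (k - i)` plus monomials containing some `X j` with `j > i`; for the weights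
`ν j = (k + 1) ^ j` this makes `X i ^ (k - i)` the unique term of least `ν`-weight. Replacing,
in each monomial `X ^ a`, the powers `X i ^ (k - i)` by `T i` gives homogeneous polynomials that
are unitriangular with respect to the monomial basis, hence form a basis of `R`, and `I_k` is
spanned by those in which some `T i` occurs. So `(R/I_k)_d` has a basis indexed by the exponents
`a` of weight `d` with `a i < k - i` for all `i`, and these are counted by the product.
-/

theorem LinearIndependent.finrank_span_image {K ι M : Type*} [Field K] [AddCommGroup M]
    [Module K M] {v : ι → M} (hv : LinearIndependent K v) (s : Set ι) :
    Module.finrank K (Submodule.span K (v '' s)) = Nat.card s := by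
  rw [Set.image_eq_range]
  exact Module.finrank_eq_nat_card_basis (Module.Basis.span (hv.comp _ Subtype.val_injective))

theorem LinearMap.finrank_map_of_disjoint_ker {K M N : Type*} [Field K] [AddCommGroup M]
    [Module K M] [AddCommGroup N] [Module K N] (f : M →ₗ[K] N) {p : Submodule K M}
    (h : Disjoint p (LinearMap.ker f)) :
    Module.finrank K (p.map f) = Module.finrank K p := by
  rw [← LinearMap.range_domRestrict]
  refine LinearMap.finrank_range_of_inj fun x y hxy => Subtype.ext ?_
  exact LinearMap.injOn_of_disjoint_ker le_rfl h x.2 y.2 hxy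

theorem Equiv.Perm.exists_apply_lt {N : ℕ} {τ : Equiv.Perm (Fin N)} (h : τ ≠ 1) :
    ∃ x, τ x < x := by
  by_contra! hle
  have hsum : ∑ x : Fin N, (x : ℕ) = ∑ x, (τ x : ℕ) := (Equiv.sum_comp τ (fun x => (x : ℕ))).symm
  have heq := (Finset.sum_eq_sum_iff_of_le fun x _ => Fin.le_iff_val_le_val.mp (hle x)).mp hsum
  exact h (Equiv.ext fun x => Fin.ext (heq x (Finset.mem_univ x)).symm)

theorem Polynomial.coeff_prod_sum_range_X_pow {σ : Type*} [Fintype σ] (w n : σ → ℕ) (d : ℕ) :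
    (∏ i, ∑ j ∈ Finset.range (n i), (Polynomial.X : Polynomial ℕ) ^ (j * w i)).coeff d =
      Nat.card {a : σ →₀ ℕ | weight w a = d ∧ ∀ i, a i < n i} := by
  classical
  simp_rw [Finset.prod_univ_sum, Finset.prod_pow_eq_pow_sum, Polynomial.finsetSum_coeff,
    Polynomial.coeff_X_pow, Finset.sum_boole, Nat.cast_id]
  rw [← Fintype.card_coe, ← Nat.card_eq_fintype_card]
  refine Nat.card_congr (Equiv.subtypeEquiv equivFunOnFinite.symm fun a => ?_)
  simp [weight_eq_sum, Fintype.mem_piFinset, eq_comm, and_comm]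

namespace MvPolynomial

section CommRing

variable {σ R : Type*} [CommRing R]

theorem IsWeightedHomogeneous.of_natCast {w : σ → ℕ} {p : MvPolynomial σ R} {m : ℕ}
    (h : IsWeightedHomogeneous (fun i => (w i : ℤ)) p m) : IsWeightedHomogeneous w p m := by
  intro c hc
  have := h hc
  simp only [weight_apply, Finsupp.sum, smul_eq_mul, nsmul_eq_mul] at this ⊢
  exact_mod_cast this

theorem isWeightedHomogeneous_det {ι M : Type*} [Fintype ι] [DecidableEq ι] [AddCommGroup M]
    {w : σ → M} (A : Matrix ι ι (MvPolynomial σ R)) (f g : ι → M)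
    (hA : ∀ i j, IsWeightedHomogeneous w (A i j) (g j - f i)) :
    IsWeightedHomogeneous w A.det (∑ j, g j - ∑ i, f i) := by
  rw [Matrix.det_apply]
  refine Submodule.sum_mem (weightedHomogeneousSubmodule R w _) fun τ _ => ?_
  rw [Units.smul_def]
  refine Submodule.smul_of_tower_mem _ _ ?_
  rw [mem_weightedHomogeneousSubmodule]
  convert IsWeightedHomogeneous.prod Finset.univ (fun j => A (τ j) j) (fun j => g j - f (τ j))
    fun j _ => hA _ _ using 1
  rw [Finset.sum_sub_distrib, Equiv.sum_comp τ f]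

theorem mul_mem_restrictSupport_le_weight {ν : σ → ℕ} {m m' : ℕ} {p q : MvPolynomial σ R}
    (hp : p ∈ restrictSupport R {c | m ≤ weight ν c})
    (hq : q ∈ restrictSupport R {c | m' ≤ weight ν c}) :
    p * q ∈ restrictSupport R {c | m + m' ≤ weight ν c} := by
  refine restrictSupport_mono R ?_ (restrictSupport_add R _ _ ▸ Submodule.mul_mem_mul hp hq)
  rintro _ ⟨c, hc, c', hc', rfl⟩
  simp only [Set.mem_ofPred_eq, map_add] at hc hc' ⊢
  omega

/-- `p` is `X ^ a` plus terms of strictly larger `ν`-weight. -/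
def HasLowestMonomial (ν : σ → ℕ) (a : σ →₀ ℕ) (p : MvPolynomial σ R) : Prop :=
  p - monomial a 1 ∈ restrictSupport R {c | weight ν a + 1 ≤ weight ν c}

variable {ν : σ → ℕ}

theorem hasLowestMonomial_monomial (a : σ →₀ ℕ) :
    HasLowestMonomial ν a (monomial a (1 : R)) := by
  simp [HasLowestMonomial]

namespace HasLowestMonomial

variable {a b : σ →₀ ℕ} {p q : MvPolynomial σ R}

theorem mem_restrictSupport (h : HasLowestMonomial ν a p) :
    p ∈ restrictSupport R {c | weight ν a ≤ weight ν c} := by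
  rw [← sub_add_cancel p (monomial a 1)]
  refine add_mem (restrictSupport_mono R (Set.ofPred_subset_ofPred.mpr fun c hc => by omega) h) ?_
  simp

theorem mul (hp : HasLowestMonomial ν a p) (hq : HasLowestMonomial ν b q) :
    HasLowestMonomial ν (a + b) (p * q) := by
  have hX : monomial a (1 : R) ∈ restrictSupport R {c | weight ν a ≤ weight ν c} := by simp
  have h₁ := mul_mem_restrictSupport_le_weight hp hq.mem_restrictSupport
  have h₂ := mul_mem_restrictSupport_le_weight hX hq
  rw [add_right_comm] at h₁
  rw [← add_assoc] at h₂
  unfold HasLowestMonomial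
  rw [show p * q - monomial (a + b) 1 =
      (p - monomial a 1) * q + monomial a 1 * (q - monomial b 1) by
    rw [show monomial (a + b) (1 : R) = monomial a 1 * monomial b 1 by simp [monomial_mul]]
    ring, map_add]
  exact add_mem h₁ h₂

theorem prod {ι : Type*} (s : Finset ι) {a : ι → σ →₀ ℕ} {p : ι → MvPolynomial σ R}
    (h : ∀ i ∈ s, HasLowestMonomial ν (a i) (p i)) :
    HasLowestMonomial ν (∑ i ∈ s, a i) (∏ i ∈ s, p i) := by
  classical
  induction s using Finset.induction_on with
  | empty => simpa using hasLowestMonomial_monomial (R := R) (ν := ν) 0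
  | insert j s hj ih =>
    rw [Finset.prod_insert hj, Finset.sum_insert hj]
    exact (h j (Finset.mem_insert_self j s)).mul (ih fun i hi => h i (Finset.mem_insert_of_mem hi))

theorem pow (h : HasLowestMonomial ν a p) (m : ℕ) : HasLowestMonomial ν (m • a) (p ^ m) := by
  simpa using prod (Finset.range m) (fun _ _ => h)

theorem coeff_self [DecidableEq σ] (h : HasLowestMonomial ν a p) : coeff a p = 1 := by
  by_contra hne
  have hmem : a ∈ (p - monomial a 1).support := by
    rw [mem_support_iff, coeff_sub, coeff_monomial, if_pos rfl, sub_ne_zero]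
    exact hne
  simpa using (mem_restrictSupport_iff R).mp h hmem

theorem coeff_eq_zero [DecidableEq σ] (h : HasLowestMonomial ν a p) (hb : b ≠ a)
    (hle : weight ν b ≤ weight ν a) : coeff b p = 0 := by
  by_contra hne
  have hmem : b ∈ (p - monomial a 1).support := by
    rw [mem_support_iff, coeff_sub, coeff_monomial, if_neg hb.symm, sub_zero]
    exact hne
  have := (mem_restrictSupport_iff R).mp h hmem
  simp only [Set.mem_ofPred_eq] at this
  omega

end HasLowestMonomial

theorem linearIndependent_of_hasLowestMonomial {v : (σ →₀ ℕ) → MvPolynomial σ R}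
    (hv : ∀ a, HasLowestMonomial ν a (v a)) : LinearIndependent R v := by
  classical
  rw [linearIndependent_iff']
  intro s g hg
  by_contra! h
  obtain ⟨i, hi, hgi⟩ := h
  obtain ⟨a, ha, hmin⟩ := (s.filter (g · ≠ 0)).exists_min_image (weight ν)
    ⟨i, Finset.mem_filter.mpr ⟨hi, hgi⟩⟩
  rw [Finset.mem_filter] at ha
  have hcoeff : coeff a (∑ b ∈ s, g b • v b) = g a := by
    rw [coeff_sum, Finset.sum_eq_single a]
    · rw [coeff_smul, (hv a).coeff_self, smul_eq_mul, mul_one]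
    · intro b hb hba
      by_cases hgb : g b = 0
      · simp [hgb]
      · rw [coeff_smul, (hv b).coeff_eq_zero (Ne.symm hba)
          (hmin b (Finset.mem_filter.mpr ⟨hb, hgb⟩)), smul_zero]
    · exact fun h => absurd ha.1 h
  rw [hg, coeff_zero] at hcoeff
  exact ha.2 hcoeff.symm

section DivModProd

variable [Fintype σ] (n : σ → ℕ) (T : σ → MvPolynomial σ R)

noncomputable def divModProd (a : σ →₀ ℕ) : MvPolynomial σ R :=
  ∏ i, X i ^ (a i % n i) * T i ^ (a i / n i)

variable {n T}

theorem divModProd_add_single [DecidableEq σ] (a : σ →₀ ℕ) {i : σ} (hi : 0 < n i) :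
    divModProd n T (a + single i (n i)) = divModProd n T a * T i := by
  have hfactor (j : σ) :
      X j ^ ((a + single i (n i)) j % n j) * T j ^ ((a + single i (n i)) j / n j) =
        X j ^ (a j % n j) * T j ^ (a j / n j) * if j = i then T i else 1 := by
    by_cases hj : j = i
    · subst hj
      simp [Nat.add_mod_right, Nat.add_div_right _ hi, pow_succ, mul_assoc]
    · simp [hj]
  simp only [divModProd, hfactor, Finset.prod_mul_distrib, Finset.prod_ite_eq', Finset.mem_univ,
    if_true]

theorem isWeightedHomogeneous_divModProd {w : σ → ℕ}
    (hT : ∀ i, IsWeightedHomogeneous w (T i) (n i * w i)) (a : σ →₀ ℕ) :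
    IsWeightedHomogeneous w (divModProd n T a) (weight w a) := by
  rw [weight_eq_sum]
  refine IsWeightedHomogeneous.prod _ _ _ fun i _ => ?_
  convert ((isWeightedHomogeneous_X R w i).pow (a i % n i)).mul ((hT i).pow (a i / n i)) using 1
  simp only [smul_eq_mul]
  conv_lhs => rw [← Nat.mod_add_div (a i) (n i)]
  ring

theorem hasLowestMonomial_divModProd (hT : ∀ i, HasLowestMonomial ν (single i (n i)) (T i))
    (a : σ →₀ ℕ) : HasLowestMonomial ν a (divModProd n T a) := by
  convert HasLowestMonomial.prod Finset.univ fun i _ =>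
    ((hasLowestMonomial_monomial (R := R) (ν := ν) (single i 1)).pow (a i % n i)).mul
      ((hT i).pow (a i / n i))
  · conv_lhs => rw [← univ_sum_single a]
    refine Finset.sum_congr rfl fun i _ => ?_
    rw [smul_single, smul_single, ← single_add, smul_eq_mul, smul_eq_mul, mul_one,
      Nat.mod_add_div']
  · simp [divModProd, X_pow_eq_monomial, monomial_pow]

end DivModProd

end CommRing

section Field

variable {σ K : Type*} [Field K]

theorem finrank_weightedHomogeneousSubmodule (w : σ → ℕ) (d : ℕ) :
    Module.finrank K (weightedHomogeneousSubmodule K w d) =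
      Nat.card {a : σ →₀ ℕ | weight w a = d} := by
  rw [weightedHomogeneousSubmodule_eq_finsupp_supported]
  exact Module.finrank_eq_nat_card_basis (basisRestrictSupport K _)

variable [Fintype σ] {w n ν : σ → ℕ} {T : σ → MvPolynomial σ K}
  (hw : ∀ i, w i ≠ 0) (hTw : ∀ i, IsWeightedHomogeneous w (T i) (n i * w i))
  (hTν : ∀ i, HasLowestMonomial ν (single i (n i)) (T i))
include hw hTw hTν

theorem span_divModProd_eq_weightedHomogeneousSubmodule (d : ℕ) :
    Submodule.span K (divModProd n T '' {a | weight w a = d}) =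
      weightedHomogeneousSubmodule K w d := by
  have hle : Submodule.span K (divModProd n T '' {a | weight w a = d}) ≤
      weightedHomogeneousSubmodule K w d := by
    rw [Submodule.span_le]
    rintro _ ⟨a, rfl, rfl⟩
    exact isWeightedHomogeneous_divModProd hTw a
  have : FiniteDimensional K (weightedHomogeneousSubmodule K w d) :=
    Module.Finite.iff_fg.mpr (weightedHomogeneousSubmodule_fg K w hw d)
  refine Submodule.eq_of_le_of_finrank_eq hle ?_
  have hli := linearIndependent_of_hasLowestMonomial (hasLowestMonomial_divModProd hTν)
  rw [hli.finrank_span_image, finrank_weightedHomogeneousSubmodule]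

theorem span_range_divModProd : Submodule.span K (Set.range (divModProd n T)) = ⊤ := by
  rw [eq_top_iff, ← restrictSupport_univ, restrictSupport_eq_span, Submodule.span_le]
  rintro _ ⟨a, -, rfl⟩
  have hmem : monomial a (1 : K) ∈ weightedHomogeneousSubmodule K w (weight w a) :=
    isWeightedHomogeneous_monomial w a 1 rfl
  rw [← span_divModProd_eq_weightedHomogeneousSubmodule hw hTw hTν] at hmem
  exact Submodule.span_mono (Set.image_subset_range _ _) hmem

theorem restrictScalars_span_range_eq (hn : ∀ i, 0 < n i) :
    (Ideal.span (Set.range T)).restrictScalars K =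
      Submodule.span K (divModProd n T '' {a | ∃ i, n i ≤ a i}) := by
  classical
  apply le_antisymm
  · intro f hf
    obtain ⟨c, rfl⟩ := Ideal.mem_span_range_iff_exists_fun.mp hf
    refine Submodule.sum_mem _ fun i _ => ?_
    have hc : c i ∈ Submodule.span K (Set.range (divModProd n T)) := by
      rw [span_range_divModProd hw hTw hTν]
      trivial
    have hmul : (Submodule.span K (Set.range (divModProd n T))).map
        (LinearMap.mulRight K (T i)) ≤
        Submodule.span K (divModProd n T '' {a | ∃ i, n i ≤ a i}) := by
      rw [Submodule.map_span, Submodule.span_le, ← Set.range_comp, Set.range_subset_iff]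
      intro a
      refine Submodule.subset_span ⟨a + single i (n i), ⟨i, by simp⟩, ?_⟩
      simp [divModProd_add_single a (hn i)]
    exact hmul (Submodule.mem_map_of_mem hc)
  · rw [Submodule.span_le]
    rintro _ ⟨a, ⟨i, hi⟩, rfl⟩
    rw [← tsub_add_cancel_of_le (single_le_iff.mpr hi), divModProd_add_single _ (hn i)]
    exact Ideal.mul_mem_left _ _ (Ideal.subset_span ⟨i, rfl⟩)

theorem finrank_map_mkₐ_weightedHomogeneousSubmodule (hn : ∀ i, 0 < n i) (d : ℕ) :
    Module.finrank K ((weightedHomogeneousSubmodule K w d).map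
        (Ideal.Quotient.mkₐ K (Ideal.span (Set.range T))).toLinearMap) =
      Nat.card {a : σ →₀ ℕ | weight w a = d ∧ ∀ i, a i < n i} := by
  set π := (Ideal.Quotient.mkₐ K (Ideal.span (Set.range T))).toLinearMap
  set D := {a : σ →₀ ℕ | weight w a = d}
  set S := {a : σ →₀ ℕ | ∀ i, a i < n i}
  set N := {a : σ →₀ ℕ | ∃ i, n i ≤ a i}
  have hli := linearIndependent_of_hasLowestMonomial (hasLowestMonomial_divModProd hTν)
  have hker : LinearMap.ker π = Submodule.span K (divModProd n T '' N) := by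
    rw [← restrictScalars_span_range_eq hw hTw hTν hn]
    ext f
    exact Ideal.Quotient.eq_zero_iff_mem
  have hSN : S ∪ N = Set.univ := Set.eq_univ_of_forall fun a => by
    by_cases h : ∀ i, a i < n i
    · exact Or.inl h
    · exact Or.inr (by simpa [N] using h)
  have hsplit : weightedHomogeneousSubmodule K w d =
      Submodule.span K (divModProd n T '' (D ∩ S)) ⊔
        Submodule.span K (divModProd n T '' (D ∩ N)) := by
    rw [← Submodule.span_union, ← Set.image_union, ← Set.inter_union_distrib_left, hSN,
      Set.inter_univ, span_divModProd_eq_weightedHomogeneousSubmodule hw hTw hTν]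
  have hN : (Submodule.span K (divModProd n T '' (D ∩ N))).map π = ⊥ := by
    rw [← LinearMap.le_ker_iff_map, hker]
    exact Submodule.span_mono (Set.image_mono Set.inter_subset_right)
  have hS : Disjoint (Submodule.span K (divModProd n T '' (D ∩ S))) (LinearMap.ker π) := by
    rw [hker]
    refine hli.disjoint_span_image (Set.disjoint_left.mpr ?_)
    rintro a ⟨-, ha⟩ ⟨i, hi⟩
    exact absurd (ha i) (by omega)
  rw [hsplit, Submodule.map_sup, hN, sup_bot_eq, LinearMap.finrank_map_of_disjoint_ker _ hS,
    hli.finrank_span_image]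
  rfl

end Field

end MvPolynomial

open MvPolynomial

theorem hElem_eq_X {k : ℕ} {m : ℤ} (h1 : 1 ≤ m) (h2 : m ≤ k) :
    hElem k m = X ⟨m.toNat - 1, by omega⟩ := by
  rw [hElem, dif_pos ⟨h1, h2⟩]

theorem hElem_eq_zero {k : ℕ} {m : ℤ} (h : m < 0 ∨ k < m) : hElem k m = 0 := by
  rw [hElem, dif_neg (by omega), if_neg (by omega)]

theorem isWeightedHomogeneous_hElem (k : ℕ) (m : ℤ) :
    IsWeightedHomogeneous (fun i : Fin k => ((i : ℕ) : ℤ) + 1) (hElem k m) m := by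
  unfold hElem
  split_ifs with h h0
  · convert isWeightedHomogeneous_X ℚ _ _ using 1
    simp only
    omega
  · subst h0
    exact isWeightedHomogeneous_one ℚ _
  · exact isWeightedHomogeneous_zero ℚ _ _

theorem hElem_mem_restrictSupport {k ℓ : ℕ} {m : ℤ} (hm : ℓ < m) :
    hElem k m ∈
      restrictSupport ℚ {c | (k + 1) ^ ℓ ≤ weight (fun j : Fin k => (k + 1) ^ (j : ℕ)) c} := by
  by_cases hk : m ≤ k
  · rw [hElem_eq_X (by omega) hk, X, monomial_mem_restrictSupport]
    left
    simp only [Set.mem_ofPred_eq, weight_single, smul_eq_mul, one_mul]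
    exact Nat.pow_le_pow_right (by omega) (by omega)
  · rw [hElem_eq_zero (by omega)]
    exact zero_mem _

theorem prod_hElem_mem_restrictSupport {k ℓ N : ℕ} {τ : Equiv.Perm (Fin N)} (hτ : τ ≠ 1) :
    ∏ x, hElem k ((ℓ : ℤ) - (((τ x : ℕ) : ℤ) + 1) + (((x : ℕ) : ℤ) + 1)) ∈
      restrictSupport ℚ {c | (k + 1) ^ ℓ ≤ weight (fun j : Fin k => (k + 1) ^ (j : ℕ)) c} := by
  classical
  obtain ⟨x, hx⟩ := Equiv.Perm.exists_apply_lt hτ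
  rw [Fin.lt_def] at hx
  rw [← Finset.mul_prod_erase _ _ (Finset.mem_univ x), ← add_zero ((k + 1) ^ ℓ)]
  exact mul_mem_restrictSupport_le_weight (hElem_mem_restrictSupport (by omega))
    (by simp [restrictSupport_univ])

theorem isWeightedHomogeneous_rectSchur (k ℓ : ℕ) :
    IsWeightedHomogeneous (fun i : Fin k => (i : ℕ) + 1) (rectSchur k ℓ) ((k + 1 - ℓ) * ℓ) := by
  apply IsWeightedHomogeneous.of_natCast
  have hdeg : (((k + 1 - ℓ) * ℓ : ℕ) : ℤ) = ∑ y : Fin (k + 1 - ℓ), ((ℓ : ℤ) + ((y : ℕ) + 1)) -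
      ∑ x : Fin (k + 1 - ℓ), (((x : ℕ) : ℤ) + 1) := by
    rw [← Finset.sum_sub_distrib]
    simp
  rw [hdeg]
  push_cast
  refine isWeightedHomogeneous_det _ _ _ fun x y => ?_
  rw [show (ℓ : ℤ) + (((y : ℕ) : ℤ) + 1) - (((x : ℕ) : ℤ) + 1) =
    ℓ - (((x : ℕ) : ℤ) + 1) + (((y : ℕ) : ℤ) + 1) by ring]
  exact isWeightedHomogeneous_hElem k _

theorem hasLowestMonomial_rectSchur {k : ℕ} (i : Fin k) :
    HasLowestMonomial (fun j : Fin k => (k + 1) ^ (j : ℕ)) (single i (k - i))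
      (rectSchur k (i + 1)) := by
  classical
  set ν := fun j : Fin k => (k + 1) ^ (j : ℕ)
  have hdiag : ∏ x : Fin (k + 1 - (i + 1)),
      hElem k ((((i : ℕ) + 1 : ℕ) : ℤ) - (((x : ℕ) : ℤ) + 1) + (((x : ℕ) : ℤ) + 1)) =
        monomial (single i (k - i)) 1 := by
    have hX : hElem k (((i : ℕ) + 1 : ℕ) : ℤ) = X i := by
      rw [hElem_eq_X (by omega) (by omega)]
      congr
    simp only [sub_add_cancel, hX, Finset.prod_const, Finset.card_univ, Fintype.card_fin,
      X_pow_eq_monomial, Nat.add_sub_add_right]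
  have hbound : {c : Fin k →₀ ℕ | (k + 1) ^ ((i : ℕ) + 1) ≤ weight ν c} ⊆
      {c | weight ν (single i (k - i)) + 1 ≤ weight ν c} := by
    refine Set.ofPred_subset_ofPred.mpr fun c hc => le_trans ?_ hc
    have hpos : 0 < (k + 1) ^ (i : ℕ) := by positivity
    simp only [weight_single, smul_eq_mul, pow_succ, ν]
    nlinarith [Nat.sub_le k i]
  unfold HasLowestMonomial rectSchur
  rw [Matrix.det_apply, ← Finset.add_sum_erase _ _ (Finset.mem_univ 1), Equiv.Perm.sign_one,
    one_smul]
  simp only [Matrix.of_apply, Equiv.Perm.one_apply]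
  rw [hdiag, add_sub_cancel_left]
  refine Submodule.sum_mem _ fun τ hτ => ?_
  rw [Units.smul_def]
  exact Submodule.smul_of_tower_mem _ _
    (restrictSupport_mono ℚ hbound (prod_hElem_mem_restrictSupport (Finset.ne_of_mem_erase hτ)))

theorem rectIdeal_eq_span_range (k : ℕ) :
    rectIdeal k = Ideal.span (Set.range fun i : Fin k => rectSchur k (i + 1)) := by
  rw [rectIdeal]
  congr 1
  ext p
  constructor
  · rintro ⟨ℓ, ⟨h1, h2⟩, rfl⟩
    exact ⟨⟨ℓ - 1, by omega⟩, by simp only; congr; omega⟩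
  · rintro ⟨i, rfl⟩
    exact ⟨i + 1, ⟨by omega, i.isLt⟩, rfl⟩

theorem rankGenPoly_eq_prod_fin (k : ℕ) :
    rankGenPoly k =
      ∏ i : Fin k, ∑ j ∈ Finset.range (k - i), Polynomial.X ^ (j * ((i : ℕ) + 1)) := by
  cases k with
  | zero => simp [rankGenPoly]
  | succ m =>
    rw [Fin.prod_univ_castSucc]
    simp only [Fin.val_castSucc, Fin.val_last, Nat.add_sub_cancel_left, Finset.range_one,
      Finset.sum_singleton, zero_mul, pow_zero, mul_one]
    rw [Fin.prod_univ_eq_prod_range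
      (fun i => ∑ j ∈ Finset.range (m + 1 - i), Polynomial.X ^ (j * (i + 1))),
      rankGenPoly, Nat.add_sub_cancel, ← Finset.Ico_add_one_right_eq_Icc,
      Finset.prod_Ico_eq_prod_range, Nat.add_sub_cancel]
    refine Finset.prod_congr rfl fun i hi => ?_
    rw [Finset.mem_range] at hi
    rw [add_comm 1 i]
    congr 2
    omega

theorem hilbert_series_quotient_general (k : ℕ) (d : ℕ) :
    Module.finrank ℚ
      (Submodule.map (Ideal.Quotient.mkₐ ℚ (rectIdeal k)).toLinearMap
        (MvPolynomial.weightedHomogeneousSubmodule ℚ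
          (fun i : Fin k => (i : ℕ) + 1) d)) =
      (rankGenPoly k).coeff d := by
  have hTw (i : Fin k) : IsWeightedHomogeneous (fun j : Fin k => (j : ℕ) + 1)
      (rectSchur k (i + 1)) ((k - i) * (i + 1)) := by
    simpa only [Nat.add_sub_add_right] using isWeightedHomogeneous_rectSchur k (i + 1)
  rw [rectIdeal_eq_span_range, finrank_map_mkₐ_weightedHomogeneousSubmodule
    (fun i : Fin k => Nat.succ_ne_zero i) hTw hasLowestMonomial_rectSchur (fun i => by omega),
    rankGenPoly_eq_prod_fin, Polynomial.coeff_prod_sum_range_X_pow]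

/-- Grade `R = ℚ[h_1, …, h_k]` by giving `h_i` degree `i` (the
variable `X i` gets weight `i + 1`).  Since `I_k` is homogeneous, the degree-`d`
component of `R/I_k` is the image of the degree-`d` weighted-homogeneous
component of `R` under the quotient map.  Its `ℚ`-dimension equals the
coefficient of `q^d` in `∏_{i=1}^{k-1} (1 + q^i + ⋯ + q^{(k-i)i})`. -/
theorem hilbert_series_quotient (k : ℕ) (hk : 0 < k) (d : ℕ) :
    Module.finrank ℚ
      (Submodule.map (Ideal.Quotient.mkₐ ℚ (rectIdeal k)).toLinearMap
        (MvPolynomial.weightedHomogeneousSubmodule ℚ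
          (fun i : Fin k => (i : ℕ) + 1) d)) =
      (rankGenPoly k).coeff d :=
  hilbert_series_quotient_general k d
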